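/- The DWF allocation maximizes single-hop EH throughput: among all measurable power allocations P(t) ≥ 0 on [0,T] satisfying the energy causality constraint ∫₀ᵗ P(τ)dτ ≤ E_Σ^EH(t) for all t, the DWF piecewise-constant allocation maximizes the throughput ∫₀ᵀ g(P(t))dt, where g is strictly concave and increasing. -/

import Mathlib

/-!
On the `k`-th DWF interval the DWF power `p k` is constant, and concavity of `g` gives the
affine majorant `g x ≤ g (p k) + σ k * (x - p k)`, with `σ k` the right derivative of `g` at
`p k`. Integrating it over that interval bounds the throughput of `P` by the DWF throughput
plus `∑ k, σ k * (I k - S k)`, where `I k` is the energy `P` spends on the interval and `S k`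
the energy the DWF allocation spends there. The greedy prefix minimization makes the DWF powers
nondecreasing, so `σ` is nonnegative and nonincreasing; causality, evaluated just before each
DWF point, makes every partial sum of `I - S` nonpositive; summation by parts then shows the
correction term is nonpositive.
-/

open MeasureTheory Set Finset

namespace ConvexOn

variable {S : Set ℝ} {f : ℝ → ℝ} {x y : ℝ}

lemma add_rightDeriv_mul_sub_le (hf : ConvexOn ℝ S f) (hx : x ∈ interior S) (hy : y ∈ S) :
    f x + derivWithin f (Ioi x) x * (y - x) ≤ f y := by
  rcases lt_trichotomy y x with hyx | rfl | hxy
  · have h := (hf.slope_le_leftDeriv_of_mem_interior hy hx hyx).trans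
      (hf.leftDeriv_le_rightDeriv_of_mem_interior hx)
    rw [slope_def_field, div_le_iff₀ (sub_pos.2 hyx)] at h
    linarith
  · simp
  · have h := hf.rightDeriv_le_slope_of_mem_interior hx hy hxy
    rw [slope_def_field, le_div_iff₀ (sub_pos.2 hxy)] at h
    linarith

end ConvexOn

namespace ConcaveOn

variable {S : Set ℝ} {f : ℝ → ℝ} {x y : ℝ}

lemma le_add_rightDeriv_mul_sub (hf : ConcaveOn ℝ S f) (hx : x ∈ interior S) (hy : y ∈ S) :
    f y ≤ f x + derivWithin f (Ioi x) x * (y - x) := by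
  have h := hf.neg.add_rightDeriv_mul_sub_le hx hy
  simp only [derivWithin.neg, Pi.neg_apply] at h
  linarith

lemma antitoneOn_rightDeriv (hf : ConcaveOn ℝ S f) :
    AntitoneOn (fun x ↦ derivWithin f (Ioi x) x) (interior S) := fun x hx y hy hxy ↦ by
  simpa [derivWithin.neg] using hf.neg.monotoneOn_rightDeriv hx hy hxy

end ConcaveOn

lemma sum_mul_nonpos_of_antitone_of_sum_range_nonpos {σ x : ℕ → ℝ} {n : ℕ}
    (hσ : ∀ k, k + 1 < n → σ (k + 1) ≤ σ k) (hσ_nonneg : ∀ k < n, 0 ≤ σ k)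
    (hx : ∀ k ≤ n, ∑ i ∈ range k, x i ≤ 0) :
    ∑ i ∈ range n, σ i * x i ≤ 0 := by
  rcases Nat.eq_zero_or_pos n with rfl | hn
  · simp
  have h := Finset.sum_range_by_parts σ x n
  simp only [smul_eq_mul] at h
  rw [h, sub_nonpos]
  refine (mul_nonpos_of_nonneg_of_nonpos (hσ_nonneg _ (by omega)) (hx n le_rfl)).trans
    (sum_nonneg fun k hk ↦ ?_)
  rw [Finset.mem_range] at hk
  exact mul_nonneg_of_nonpos_of_nonpos (sub_nonpos.2 (hσ k (by omega))) (hx _ (by omega))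

lemma div_le_div_of_div_le_add_div_add {a b c d : ℝ} (hb : 0 < b) (hd : 0 < d)
    (h : a / b ≤ (a + c) / (b + d)) : a / b ≤ c / d := by
  rw [div_le_div_iff₀ hb (by positivity)] at h
  rw [div_le_div_iff₀ hb hd]
  linarith

lemma average_le_next_of_le_prefix_average {E t : ℕ → ℝ} {i₀ i₁ i₂ : ℕ}
    (h₀₁ : i₀ ≤ i₁) (h₁₂ : i₁ ≤ i₂) (ht₀₁ : t i₀ < t i₁) (ht₁₂ : t i₁ < t i₂)
    (h : (∑ j ∈ Ioc i₀ i₁, E j) / (t i₁ - t i₀) ≤ (∑ j ∈ Ioc i₀ i₂, E j) / (t i₂ - t i₀)) :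
    (∑ j ∈ Ioc i₀ i₁, E j) / (t i₁ - t i₀) ≤ (∑ j ∈ Ioc i₁ i₂, E j) / (t i₂ - t i₁) := by
  rw [← sum_Ioc_consecutive E h₀₁ h₁₂,
    show t i₂ - t i₀ = (t i₁ - t i₀) + (t i₂ - t i₁) by ring] at h
  exact div_le_div_of_div_le_add_div_add (sub_pos.2 ht₀₁) (sub_pos.2 ht₁₂) h

lemma sum_Ioc_pos {E : ℕ → ℝ} {N i₀ i₁ : ℕ} (hE : ∀ i ∈ Finset.Icc 1 N, 0 < E i)
    (h₀₁ : i₀ < i₁) (h₁ : i₁ ≤ N) : 0 < ∑ j ∈ Ioc i₀ i₁, E j :=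
  sum_pos (fun j hj ↦ hE j (by simp only [Finset.mem_Ioc] at hj; simp only [Finset.mem_Icc]; omega))
    ⟨i₁, Finset.mem_Ioc.2 ⟨h₀₁, le_rfl⟩⟩

lemma sum_Icc_one_eq_sum_range {M : Type*} [AddCommMonoid M] (f : ℕ → M) (n : ℕ) :
    ∑ k ∈ Icc 1 n, f k = ∑ k ∈ range n, f (k + 1) := by
  rw [range_eq_Ico, sum_Ico_add', zero_add, Finset.Ico_add_one_right_eq_Icc]

lemma sum_range_sum_Ioc {M : Type*} [AddCommMonoid M] (f : ℕ → M) {idx : ℕ → ℕ} {m : ℕ}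
    (hidx : MonotoneOn idx (Set.Iic m)) :
    ∑ k ∈ range m, ∑ j ∈ Ioc (idx k) (idx (k + 1)), f j = ∑ j ∈ Ioc (idx 0) (idx m), f j := by
  induction m with
  | zero => simp
  | succ m ih =>
    rw [sum_range_succ, ih (hidx.mono (Set.Iic_subset_Iic.2 m.le_succ)), sum_Ioc_consecutive]
    · exact hidx (Nat.zero_le _) (Nat.le_succ m) (Nat.zero_le m)
    · exact hidx (Nat.le_succ m) (le_refl (m + 1)) (Nat.le_succ m)

lemma IntervalIntegrable.mono_of_monotoneOn_Iic {f : ℝ → ℝ} {a : ℕ → ℝ} {n i j : ℕ}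
    (hf : IntervalIntegrable f volume (a 0) (a n)) (ha : MonotoneOn a (Set.Iic n)) (hij : i ≤ j)
    (hj : j ≤ n) : IntervalIntegrable f volume (a i) (a j) := by
  have hmem : ∀ k ≤ n, a k ∈ uIcc (a 0) (a n) := fun k hk ↦
    mem_uIcc_of_le (ha (Nat.zero_le n) hk (Nat.zero_le k)) (ha hk (le_refl n) hk)
  exact hf.mono_set (uIcc_subset_uIcc (hmem i (hij.trans hj)) (hmem j hj))

lemma ConcaveOn.integral_comp_le_add_rightDeriv_mul {g P : ℝ → ℝ} (hg : ConcaveOn ℝ (Ici 0) g)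
    {a b S : ℝ} (hab : a < b) (hS : 0 < S) (hP_nonneg : ∀ s ∈ Set.Icc a b, 0 ≤ P s)
    (hP : IntervalIntegrable P volume a b) (hgP : IntervalIntegrable (fun s ↦ g (P s)) volume a b) :
    ∫ s in a..b, g (P s) ≤ (b - a) * g (S / (b - a))
      + derivWithin g (Ioi (S / (b - a))) (S / (b - a)) * ((∫ s in a..b, P s) - S) := by
  set p := S / (b - a)
  set σ := derivWithin g (Ioi p) p
  have hp : p ∈ interior (Ici 0) := by simpa using div_pos hS (sub_pos.2 hab)
  have hmaj : ∀ s ∈ Set.Icc a b, g (P s) ≤ g p + σ * (P s - p) := fun s hs ↦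
    hg.le_add_rightDeriv_mul_sub hp (hP_nonneg s hs)
  have hlin : IntervalIntegrable (fun s ↦ σ * (P s - p)) volume a b :=
    (hP.sub intervalIntegrable_const).const_mul σ
  refine (intervalIntegral.integral_mono_on hab.le hgP (intervalIntegrable_const.add hlin)
    hmaj).trans_eq ?_
  rw [intervalIntegral.integral_add intervalIntegrable_const hlin,
    intervalIntegral.integral_const_mul, intervalIntegral.integral_sub hP intervalIntegrable_const,
    intervalIntegral.integral_const, intervalIntegral.integral_const, smul_eq_mul, smul_eq_mul,
    mul_div_cancel₀ _ (sub_pos.2 hab).ne']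

theorem integral_comp_le_sum_of_cumulative_le {g : ℝ → ℝ} (hg_conc : ConcaveOn ℝ (Ici 0) g)
    (hg_mono : MonotoneOn g (Ici 0)) {n : ℕ} {a S : ℕ → ℝ} (ha : ∀ k < n, a k < a (k + 1))
    (hS : ∀ k < n, 0 < S k)
    (hpow : ∀ k, k + 1 < n → S k / (a (k + 1) - a k) ≤ S (k + 1) / (a (k + 2) - a (k + 1)))
    {P : ℝ → ℝ} (hP_nonneg : ∀ s ∈ Set.Icc (a 0) (a n), 0 ≤ P s)
    (hP : IntervalIntegrable P volume (a 0) (a n))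
    (hgP : IntervalIntegrable (fun s ↦ g (P s)) volume (a 0) (a n))
    (hcum : ∀ k ≤ n, ∫ s in a 0..a k, P s ≤ ∑ i ∈ range k, S i) :
    ∫ s in a 0..a n, g (P s) ≤ ∑ k ∈ range n, (a (k + 1) - a k) * g (S k / (a (k + 1) - a k)) := by
  have ha_mono : MonotoneOn a (Set.Iic n) :=
    (strictMonoOn_Iic_of_lt_succ fun k hk ↦ by rw [Order.succ_eq_add_one]; exact ha k hk).monotoneOn
  have hint : ∀ {f : ℝ → ℝ}, IntervalIntegrable f volume (a 0) (a n) → ∀ k < n,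
      IntervalIntegrable f volume (a k) (a (k + 1)) := fun hf k hk ↦
    hf.mono_of_monotoneOn_Iic ha_mono k.le_succ hk
  have hsplit : ∀ {f : ℝ → ℝ}, IntervalIntegrable f volume (a 0) (a n) → ∀ m ≤ n,
      ∑ k ∈ range m, ∫ s in a k..a (k + 1), f s = ∫ s in a 0..a m, f s := fun hf m hm ↦
    intervalIntegral.sum_integral_adjacent_intervals fun k hk ↦ hint hf k (by omega)
  set p : ℕ → ℝ := fun k ↦ S k / (a (k + 1) - a k)
  set σ : ℕ → ℝ := fun k ↦ derivWithin g (Ioi (p k)) (p k)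
  have hp : ∀ k < n, 0 < p k := fun k hk ↦ div_pos (hS k hk) (sub_pos.2 (ha k hk))
  have hpiece : ∀ k < n, ∫ s in a k..a (k + 1), g (P s)
      ≤ (a (k + 1) - a k) * g (p k) + σ k * ((∫ s in a k..a (k + 1), P s) - S k) := fun k hk ↦
    hg_conc.integral_comp_le_add_rightDeriv_mul (ha k hk) (hS k hk)
      (fun s hs ↦ hP_nonneg s ⟨(ha_mono (Nat.zero_le n) hk.le (Nat.zero_le k)).trans hs.1,
        hs.2.trans (ha_mono hk (le_refl n) hk)⟩) (hint hP k hk) (hint hgP k hk)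
  have habel : ∑ k ∈ range n, σ k * ((∫ s in a k..a (k + 1), P s) - S k) ≤ 0 := by
    refine sum_mul_nonpos_of_antitone_of_sum_range_nonpos (fun k hk ↦ ?_)
      (fun k hk ↦ (hg_mono.mono (Ioi_subset_Ici (hp k hk).le)).derivWithin_nonneg) fun k hk ↦ ?_
    · exact hg_conc.antitoneOn_rightDeriv (by simpa using hp k (by omega))
        (by simpa using hp (k + 1) hk) (hpow k hk)
    · rw [sum_sub_distrib, hsplit hP k hk, sub_nonpos]
      exact hcum k hk
  calc ∫ s in a 0..a n, g (P s) = ∑ k ∈ range n, ∫ s in a k..a (k + 1), g (P s) :=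
        (hsplit hgP n le_rfl).symm
    _ ≤ ∑ k ∈ range n, ((a (k + 1) - a k) * g (p k)
          + σ k * ((∫ s in a k..a (k + 1), P s) - S k)) :=
        sum_le_sum fun k hk ↦ hpiece k (Finset.mem_range.1 hk)
    _ ≤ ∑ k ∈ range n, (a (k + 1) - a k) * g (p k) := by
        rw [sum_add_distrib]; linarith

lemma filter_le_eq_Ioc {t : ℕ → ℝ} {N i : ℕ} {τ : ℝ} (ht : StrictMonoOn t (Set.Icc 1 (N + 1)))
    (hi₁ : 1 ≤ i) (hiN : i ≤ N) (hτ : τ ∈ Set.Ico (t i) (t (i + 1))) :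
    (Finset.Icc 1 N).filter (fun j ↦ t j ≤ τ) = Finset.Ioc 0 i := by
  ext j
  simp only [Finset.mem_filter, Finset.mem_Icc, Finset.mem_Ioc]
  constructor
  · rintro ⟨⟨hj₁, hjN⟩, hjτ⟩
    refine ⟨hj₁, not_lt.1 fun hij ↦ ?_⟩
    have := ht.monotoneOn ⟨by omega, by omega⟩ ⟨hj₁, by omega⟩ (Nat.succ_le_of_lt hij)
    linarith [hτ.2]
  · rintro ⟨hj₀, hji⟩
    exact ⟨⟨hj₀, hji.trans hiN⟩, (ht.monotoneOn ⟨hj₀, by omega⟩ ⟨hi₁, by omega⟩ hji).trans hτ.1⟩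

lemma integral_le_sum_Ioc_of_causal {t E : ℕ → ℝ} {N : ℕ} {T : ℝ} {P : ℝ → ℝ}
    (ht₁ : t 1 = 0) (htT : t (N + 1) = T) (ht : StrictMonoOn t (Set.Icc 1 (N + 1)))
    (hP : IntervalIntegrable P volume 0 T)
    (hcausal : ∀ τ ∈ Set.Icc (0 : ℝ) T,
      ∫ s in (0 : ℝ)..τ, P s ≤ ∑ i ∈ (Finset.Icc 1 N).filter (fun i ↦ t i ≤ τ), E i)
    {i : ℕ} (hiN : i ≤ N) :
    ∫ s in (0 : ℝ)..t (i + 1), P s ≤ ∑ j ∈ Ioc 0 i, E j := by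
  rcases Nat.eq_zero_or_pos i with rfl | hi₁
  · simp [ht₁]
  have h0 : 0 ≤ t i := ht₁ ▸ ht.monotoneOn ⟨le_rfl, by omega⟩ ⟨hi₁, by omega⟩ hi₁
  have hlt : t i < t (i + 1) := ht ⟨hi₁, by omega⟩ ⟨by omega, by omega⟩ (Nat.lt_succ_self i)
  have hT : t (i + 1) ≤ T := htT ▸ ht.monotoneOn ⟨by omega, by omega⟩ ⟨by omega, le_rfl⟩ (by omega)
  have hcont : ContinuousOn (fun τ ↦ ∫ s in (0 : ℝ)..τ, P s) (Set.Icc 0 T) := by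
    simpa [uIcc_of_le (h0.trans (hlt.le.trans hT))] using
      intervalIntegral.continuousOn_primitive_interval' hP left_mem_uIcc
  -- Causality at `t (i + 1)` itself would also count `E (i + 1)`: approach it from the left.
  refine ContinuousWithinAt.closure_le (s := Set.Ico (t i) (t (i + 1)))
    (by rw [closure_Ico hlt.ne]; exact ⟨hlt.le, le_rfl⟩)
    ((hcont _ ⟨h0.trans hlt.le, hT⟩).mono fun τ hτ ↦ ⟨h0.trans hτ.1, hτ.2.le.trans hT⟩)
    continuousWithinAt_const fun τ hτ ↦ ?_
  rw [← filter_le_eq_Ioc ht hi₁ hiN hτ]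
  exact hcausal τ ⟨h0.trans hτ.1, hτ.2.le.trans hT⟩

theorem stmt5_general (g : ℝ → ℝ) (N ND : ℕ) (T : ℝ) (t : ℕ → ℝ) (E : ℕ → ℝ)
    (hg_concave : StrictConcaveOn ℝ (Set.Ici 0) g)
    (hg_mono : StrictMonoOn g (Set.Ici 0))
    (ht1 : t 1 = 0) (htT : t (N + 1) = T)
    (htmono : StrictMonoOn t (Set.Icc 1 (N + 1)))
    (hE : ∀ i ∈ Finset.Icc 1 N, 0 < E i)
    (idx : ℕ → ℕ) (hidx0 : idx 0 = 0) (hidxND : idx ND = N)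
    (hidx_mono : ∀ k ∈ Finset.Icc 1 ND, idx (k - 1) < idx k ∧ idx k ≤ N)
    (hmin : ∀ k ∈ Finset.Icc 1 ND, ∀ i, idx (k - 1) < i → i ≤ N →
      (∑ j ∈ Finset.Ioc (idx (k - 1)) (idx k), E j) / (t (idx k + 1) - t (idx (k - 1) + 1))
        ≤ (∑ j ∈ Finset.Ioc (idx (k - 1)) i, E j) / (t (i + 1) - t (idx (k - 1) + 1)))
    (P : ℝ → ℝ)
    (hPnonneg : ∀ s ∈ Set.Icc (0:ℝ) T, 0 ≤ P s)
    (hPint : IntervalIntegrable P volume 0 T)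
    (hgPint : IntervalIntegrable (fun s => g (P s)) volume 0 T)
    (hcausal : ∀ τ ∈ Set.Icc (0:ℝ) T,
      (∫ s in (0:ℝ)..τ, P s) ≤ ∑ i ∈ (Finset.Icc 1 N).filter (fun i => t i ≤ τ), E i) :
    (∫ s in (0:ℝ)..T, g (P s))
      ≤ ∑ k ∈ Finset.Icc 1 ND,
          (t (idx k + 1) - t (idx (k - 1) + 1))
            * g ((∑ j ∈ Finset.Ioc (idx (k - 1)) (idx k), E j)
                  / (t (idx k + 1) - t (idx (k - 1) + 1))) := by
  have hidx : StrictMonoOn idx (Set.Iic ND) := strictMonoOn_Iic_of_lt_succ fun k hk ↦ by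
    simpa using (hidx_mono (k + 1) (Finset.mem_Icc.2 ⟨by omega, hk⟩)).1
  have hidx_le : ∀ k ≤ ND, idx k ≤ N := fun k hk ↦ hidxND ▸ hidx.monotoneOn hk (le_refl ND) hk
  have hstep : ∀ k < ND, idx k < idx (k + 1) := fun k hk ↦
    hidx (Set.mem_Iic.2 hk.le) (Set.mem_Iic.2 hk) k.lt_succ_self
  have ht : ∀ {i j}, i < j → j ≤ N → t (i + 1) < t (j + 1) := fun hij hj ↦
    htmono ⟨by omega, by omega⟩ ⟨by omega, by omega⟩ (by omega)
  have ha0 : t (idx 0 + 1) = 0 := by rw [hidx0, ht1]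
  have haND : t (idx ND + 1) = T := by rw [hidxND, htT]
  have hpow : ∀ k, k + 1 < ND →
      (∑ j ∈ Finset.Ioc (idx k) (idx (k + 1)), E j) / (t (idx (k + 1) + 1) - t (idx k + 1))
        ≤ (∑ j ∈ Finset.Ioc (idx (k + 1)) (idx (k + 2)), E j)
            / (t (idx (k + 2) + 1) - t (idx (k + 1) + 1)) := by
    intro k hk
    have h := hmin (k + 1) (Finset.mem_Icc.2 ⟨by omega, hk.le⟩) (idx (k + 2))
      (by simpa using (hstep k (by omega)).trans (hstep (k + 1) hk)) (hidx_le _ hk)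
    simp only [Nat.add_sub_cancel] at h
    exact average_le_next_of_le_prefix_average (t := fun i ↦ t (i + 1)) (hstep k (by omega)).le
      (hstep (k + 1) hk).le (ht (hstep k (by omega)) (hidx_le _ (by omega)))
      (ht (hstep (k + 1) hk) (hidx_le _ hk)) h
  have key := integral_comp_le_sum_of_cumulative_le (n := ND) (a := fun k ↦ t (idx k + 1))
    (S := fun k ↦ ∑ j ∈ Finset.Ioc (idx k) (idx (k + 1)), E j) (P := P)
    hg_concave.concaveOn hg_mono.monotoneOn (fun k hk ↦ ht (hstep k hk) (hidx_le _ hk))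
    (fun k hk ↦ sum_Ioc_pos hE (hstep k hk) (hidx_le _ hk)) hpow
    (by simpa only [ha0, haND] using hPnonneg) (by simpa only [ha0, haND] using hPint)
    (by simpa only [ha0, haND] using hgPint)
    (fun k hk ↦ by
      simpa only [ha0, sum_range_sum_Ioc E (hidx.monotoneOn.mono (Set.Iic_subset_Iic.2 hk)), hidx0,
        zero_add, ht1]
        using integral_le_sum_Ioc_of_causal ht1 htT htmono hPint hcausal (hidx_le k hk))
  rw [sum_Icc_one_eq_sum_range]
  simpa only [ha0, haND, Nat.add_sub_cancel] using key

/-- The DWF allocation maximizes single-hop EH throughput: any measurable causal power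
allocation (never consuming more energy than harvested) delivers at most the throughput
of the DWF piecewise-constant allocation, namely
`∑_k (length of k-th DWF interval) * g(P_k)`. -/
theorem stmt5 (g : ℝ → ℝ) (N ND : ℕ) (T : ℝ) (t : ℕ → ℝ) (E : ℕ → ℝ)
    (hg_concave : StrictConcaveOn ℝ (Set.Ici 0) g)
    (hg_mono : StrictMonoOn g (Set.Ici 0))
    (hg_cont : ContinuousOn g (Set.Ici 0))
    (hg0 : g 0 = 0)
    (hN : 1 ≤ N) (hND : 1 ≤ ND)
    (ht1 : t 1 = 0) (htT : t (N + 1) = T) (hT : 0 < T)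
    (htmono : StrictMonoOn t (Set.Icc 1 (N + 1)))
    (hE : ∀ i ∈ Finset.Icc 1 N, 0 < E i)
    (idx : ℕ → ℕ) (hidx0 : idx 0 = 0) (hidxND : idx ND = N)
    (hidx_mono : ∀ k ∈ Finset.Icc 1 ND, idx (k - 1) < idx k ∧ idx k ≤ N)
    (hmin : ∀ k ∈ Finset.Icc 1 ND, ∀ i, idx (k - 1) < i → i ≤ N →
      (∑ j ∈ Finset.Ioc (idx (k - 1)) (idx k), E j) / (t (idx k + 1) - t (idx (k - 1) + 1))
        ≤ (∑ j ∈ Finset.Ioc (idx (k - 1)) i, E j) / (t (i + 1) - t (idx (k - 1) + 1)))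
    (hleast : ∀ k ∈ Finset.Icc 1 ND, ∀ i, idx (k - 1) < i → i < idx k →
      (∑ j ∈ Finset.Ioc (idx (k - 1)) (idx k), E j) / (t (idx k + 1) - t (idx (k - 1) + 1))
        < (∑ j ∈ Finset.Ioc (idx (k - 1)) i, E j) / (t (i + 1) - t (idx (k - 1) + 1)))
    (P : ℝ → ℝ) (hPmeas : Measurable P)
    (hPnonneg : ∀ s ∈ Set.Icc (0:ℝ) T, 0 ≤ P s)
    (hPint : IntervalIntegrable P volume 0 T)
    (hgPint : IntervalIntegrable (fun s => g (P s)) volume 0 T)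
    (hcausal : ∀ τ ∈ Set.Icc (0:ℝ) T,
      (∫ s in (0:ℝ)..τ, P s) ≤ ∑ i ∈ (Finset.Icc 1 N).filter (fun i => t i ≤ τ), E i) :
    (∫ s in (0:ℝ)..T, g (P s))
      ≤ ∑ k ∈ Finset.Icc 1 ND,
          (t (idx k + 1) - t (idx (k - 1) + 1))
            * g ((∑ j ∈ Finset.Ioc (idx (k - 1)) (idx k), E j)
                  / (t (idx k + 1) - t (idx (k - 1) + 1))) :=
  stmt5_general g N ND T t E hg_concave hg_mono ht1 htT htmono hE idx hidx0 hidxND hidx_mono hmin P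
    hPnonneg hPint hgPint hcausal
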